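/- arXiv:2111.10107 — 3 statements merged into one kernel-verified Lean document; each statement's English description precedes it below -/
import Mathlib

section
/- Let Ω ⊂ ℝⁿ be a bounded open set with Lipschitz boundary and β > 0. Define Λ∞(Ω) = 1/(1/β + R_Ω). If Ω^♯ is the ball with the same Lebesgue measure as Ω, then Λ∞(Ω) ≥ Λ∞(Ω^♯). -/
open MeasureTheory Metric

/-! If `x ∈ Ω` lies at distance `d` from `∂Ω`, the ball `B(x, d)` is connected and misses `∂Ω`,
so it lies in `Ω`; comparing Haar measures of balls, `|B(x, d)| ≤ |Ω| = |B(0, r)|` forces `d ≤ r`.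
Hence `R_Ω ≤ r = R_{Ω^♯}`, and `t ↦ 1 / (1 / β + t)` is decreasing on `t ≥ 0`. -/

section Inradius

variable {X : Type*} [PseudoMetricSpace X]

/-- `R_s`; since `sSup` of an unbounded set of reals is `0`, it is only meaningful when the
distances to the frontier are bounded. -/
noncomputable def inradius (s : Set X) : ℝ :=
  sSup ((fun x => infDist x (frontier s)) '' s)

lemma inradius_nonneg (s : Set X) : 0 ≤ inradius s :=
  Real.sSup_nonneg (by rintro _ ⟨x, -, rfl⟩; exact infDist_nonneg)

lemma inradius_le {s : Set X} {r : ℝ} (hr : 0 ≤ r) (h : ∀ x ∈ s, infDist x (frontier s) ≤ r) :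
    inradius s ≤ r :=
  Real.sSup_le (by rintro _ ⟨x, hx, rfl⟩; exact h x hx) hr

lemma infDist_frontier_le_inradius {s : Set X} {r : ℝ}
    (h : ∀ x ∈ s, infDist x (frontier s) ≤ r) {x : X} (hx : x ∈ s) :
    infDist x (frontier s) ≤ inradius s :=
  le_csSup ⟨r, by rintro _ ⟨y, hy, rfl⟩; exact h y hy⟩ ⟨x, hx, rfl⟩

end Inradius

section NormedSpace

variable {E : Type*} [NormedAddCommGroup E] [NormedSpace ℝ E]

lemma ball_infDist_frontier_subset {s : Set E} {x : E} (hx : x ∈ s) :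
    ball x (infDist x (frontier s)) ⊆ s := by
  set B := ball x (infDist x (frontier s))
  rcases B.eq_empty_or_nonempty with hB | hB
  · simp [hB]
  have hxB : x ∈ B := mem_ball_self (nonempty_ball.1 hB)
  have hBf : Disjoint B (frontier s) := disjoint_ball_infDist
  have hx_int : x ∈ interior s := by
    rw [← self_sdiff_frontier]
    exact ⟨hx, hBf.notMem_of_mem_left hxB⟩
  refine subset_trans ?_ interior_subset
  refine (convex_ball _ _).isPreconnected.subset_of_closure_inter_subset isOpen_interior
    ⟨x, hxB, hx_int⟩ ?_
  rintro y ⟨hy_cl, hyB⟩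
  rw [← closure_sdiff_frontier]
  exact ⟨closure_mono interior_subset hy_cl, hBf.notMem_of_mem_left hyB⟩

lemma le_of_ball_subset_ball [Nontrivial E] {x y : E} {s r : ℝ} (hs : 0 < s)
    (h : ball x s ⊆ ball y r) : s ≤ r := by
  by_contra! hrs
  obtain ⟨t, hrt, hts⟩ := exists_between (max_lt hrs hs)
  obtain ⟨v, hv⟩ := exists_norm_eq E (le_of_max_le_right hrt.le)
  have hplus : dist (x + v) y < r := h (by simpa [hv] using hts)
  have hminus : dist (x - v) y < r := h (by simpa [hv] using hts)
  have h2t : 2 * t < 2 * r :=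
    calc 2 * t = dist (x + v) (x - v) := by rw [dist_eq_norm]; simp [← two_smul ℝ v, norm_smul, hv]
      _ ≤ dist (x + v) y + dist (x - v) y := dist_triangle_right _ _ _
      _ < 2 * r := by linarith
  linarith [le_max_left r 0]

lemma inradius_ball [Nontrivial E] (x : E) {r : ℝ} (hr : 0 < r) : inradius (ball x r) = r := by
  have hle : ∀ y ∈ ball x r, infDist y (frontier (ball x r)) ≤ r := fun y hy =>
    infDist_nonneg.eq_or_lt.elim (fun h => h ▸ hr.le)
      fun h => le_of_ball_subset_ball h (ball_infDist_frontier_subset hy)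
  refine le_antisymm (inradius_le hr.le hle) ?_
  calc r ≤ infDist x (frontier (ball x r)) := by
        rw [frontier_ball x hr.ne', le_infDist (NormedSpace.sphere_nonempty.2 hr.le)]
        intro z hz
        rw [dist_comm, mem_sphere.1 hz]
    _ ≤ inradius (ball x r) := infDist_frontier_le_inradius hle (mem_ball_self hr)

variable [FiniteDimensional ℝ E] [MeasurableSpace E] [BorelSpace E]
  (μ : Measure E) [μ.IsAddHaarMeasure]

lemma le_of_measure_ball_le [Nontrivial E] {x y : E} {s r : ℝ} (hs : 0 ≤ s) (hr : 0 ≤ r)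
    (h : μ (ball x s) ≤ μ (ball y r)) : s ≤ r := by
  rw [Measure.addHaar_ball μ x hs, Measure.addHaar_ball μ y hr,
    ENNReal.mul_le_mul_iff_left (measure_ball_pos μ 0 one_pos).ne' measure_ball_lt_top.ne,
    ENNReal.ofReal_le_ofReal_iff (by positivity)] at h
  exact le_of_pow_le_pow_left₀ Module.finrank_pos.ne' hr h

lemma infDist_frontier_le_of_measure_le {s : Set E} {y : E} {r : ℝ} (hr : 0 ≤ r)
    (h : μ s ≤ μ (ball y r)) {x : E} (hx : x ∈ s) : infDist x (frontier s) ≤ r := by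
  rcases subsingleton_or_nontrivial E with hE | hE
  · -- a subsingleton space is discrete, so `frontier s = ∅` and `infDist x ∅ = 0`
    simp [hr]
  · exact le_of_measure_ball_le μ infDist_nonneg hr
      ((measure_mono (ball_infDist_frontier_subset hx)).trans h)

theorem inradius_le_inradius_ball_of_measure_eq {s : Set E} {y : E} {r : ℝ} (hr : 0 < r)
    (h : μ s = μ (ball y r)) : inradius s ≤ inradius (ball y r) := by
  rcases subsingleton_or_nontrivial E with hE | hE
  · exact (inradius_le le_rfl fun x _ => by simp).trans (inradius_nonneg _)
  · rw [inradius_ball y hr]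
    exact inradius_le hr.le fun x => infDist_frontier_le_of_measure_le μ hr.le h.le

end NormedSpace

theorem stmt_6_general {n : ℕ} (Ω : Set (EuclideanSpace ℝ (Fin n)))
    (β : ℝ) (hβ : 0 < β)
    (r : ℝ) (hr : 0 < r)
    (hvol : volume Ω = volume (ball (0 : EuclideanSpace ℝ (Fin n)) r)) :
    1 / (1 / β + sSup ((fun x => infDist x (frontier Ω)) '' Ω)) ≥
      1 / (1 / β +
        sSup ((fun x => infDist x (frontier (ball (0 : EuclideanSpace ℝ (Fin n)) r))) ''
          (ball (0 : EuclideanSpace ℝ (Fin n)) r))) :=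
  one_div_le_one_div_of_le (by have := inradius_nonneg Ω; positivity)
    (add_le_add_right (inradius_le_inradius_ball_of_measure_eq volume hr hvol) _)

/-- Faber–Krahn type inequality for `Λ∞(Ω) = 1/(1/β + R_Ω)`: if `Ω^♯`
is the ball with the same Lebesgue measure as `Ω`, then `Λ∞(Ω) ≥ Λ∞(Ω^♯)`. -/
theorem stmt_6 {n : ℕ} (Ω : Set (EuclideanSpace ℝ (Fin n)))
    (hΩo : IsOpen Ω) (hΩb : Bornology.IsBounded Ω) (hΩne : Ω.Nonempty)
    (β : ℝ) (hβ : 0 < β)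
    (r : ℝ) (hr : 0 < r)
    (hvol : volume Ω = volume (ball (0 : EuclideanSpace ℝ (Fin n)) r)) :
    1 / (1 / β + sSup ((fun x => infDist x (frontier Ω)) '' Ω)) ≥
      1 / (1 / β +
        sSup ((fun x => infDist x (frontier (ball (0 : EuclideanSpace ℝ (Fin n)) r))) ''
          (ball (0 : EuclideanSpace ℝ (Fin n)) r))) :=
  stmt_6_general Ω β hβ r hr hvol
end

section
/- Fix 0 < ε < 1, n ≥ 2, β > 0, and for p > n set α = 1/(p−1). Define v_p on B₁(0) ⊂ ℝⁿ piecewise by v_p(x) = ((p−1)/(n^α p))(ε^{p/(p−1)} − |x|^{p/(p−1)}) + (ε^{nα}(p−1)/(n^α (p−n)))(1 − ε^{(p−n)/(p−1)}) + ε^{nα}/(nβ^p)^α for |x| ≤ ε, and v_p(x) = (ε^{nα}(p−1)/(n^α(p−n)))(1 − |x|^{(p−n)/(p−1)}) + ε^{nα}/(nβ^p)^α for ε ≤ |x| ≤ 1. Then v_p converges uniformly on B₁(0), as p → ∞, to v_∞(x) = 1/β + 1 − |x| = 1/β + d(x, ∂B₁(0)). -/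
/-!
Write `α = 1 / (p - 1)` and `t = |x|`. Since `p / (p - 1) = 1 + α`, `(p - n) / (p - 1) = 1 - (n - 1) α`
and `(n β ^ p) ^ α = n ^ α β ^ (1 + α)`, each branch of `v_p` is an expression in `(α, t)` that is
jointly continuous at `α = 0`, where both branches reduce to `1 / β + 1 - t`. Joint continuity at
`α = 0` along a compact set of `x` already gives uniform convergence as `α → 0`.
-/

open Metric Filter Topology

theorem IsCompact.tendstoUniformlyOn_of_continuousAt {ι P X Y : Type*} [TopologicalSpace P]
    [TopologicalSpace X] [UniformSpace Y] {K : Set X} (hK : IsCompact K) {Φ : P × X → Y}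
    {c₀ : P} (hΦ : ∀ x ∈ K, ContinuousAt Φ (c₀, x)) {l : Filter ι} {c : ι → P}
    (hc : Tendsto c l (𝓝 c₀)) :
    TendstoUniformlyOn (fun i x => Φ (c i, x)) (fun x => Φ (c₀, x)) l K := by
  rw [← tendstoLocallyUniformlyOn_iff_tendstoUniformlyOn_of_compact hK,
    tendstoLocallyUniformlyOn_iff_filter]
  intro x hx
  rw [tendstoUniformlyOnFilter_iff_tendsto]
  have hy : Tendsto (fun q : ι × X => q.2) (l ×ˢ 𝓝[K] x) (𝓝 x) :=
    tendsto_snd.mono_right nhdsWithin_le_nhds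
  have h₀ := (hΦ x hx).tendsto.comp (tendsto_const_nhds.prodMk_nhds hy)
  have h₁ := (hΦ x hx).tendsto.comp ((hc.comp tendsto_fst).prodMk_nhds hy)
  exact (h₀.prodMk_nhds h₁).mono_right (nhds_le_uniformity _)

theorem TendstoUniformlyOn.ite {ι X Y : Type*} [UniformSpace Y] {F G : ι → X → Y} {f : X → Y}
    {l : Filter ι} {K : Set X} {p : X → Prop} [DecidablePred p]
    (hF : TendstoUniformlyOn F f l K) (hG : TendstoUniformlyOn G f l K) :
    TendstoUniformlyOn (fun i x => if p x then F i x else G i x) f l K := by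
  intro u hu
  filter_upwards [hF u hu, hG u hu] with i hFi hGi x hx
  split_ifs
  exacts [hFi x hx, hGi x hx]

noncomputable def outerProfile (n : ℕ) (β ε α t : ℝ) : ℝ :=
  ε ^ (n * α) * (1 - t ^ (1 - (n - 1) * α)) / ((n : ℝ) ^ α * (1 - (n - 1) * α)) +
    ε ^ (n * α) / ((n : ℝ) ^ α * β ^ (1 + α))

noncomputable def innerProfile (n : ℕ) (β ε α t : ℝ) : ℝ :=
  (ε ^ (1 + α) - t ^ (1 + α)) / ((n : ℝ) ^ α * (1 + α)) + outerProfile n β ε α ε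

section Profiles

variable {n : ℕ} {β ε : ℝ}

theorem outerProfile_zero (t : ℝ) : outerProfile n β ε 0 t = 1 / β + 1 - t := by
  simp only [outerProfile, mul_zero, Real.rpow_zero, sub_zero, Real.rpow_one, one_mul, mul_one,
    div_one, add_zero, one_div]
  ring

theorem innerProfile_zero (t : ℝ) : innerProfile n β ε 0 t = 1 / β + 1 - t := by
  simp only [innerProfile, add_zero, Real.rpow_one, Real.rpow_zero, mul_one, div_one,
    outerProfile_zero, one_div, sub_add_sub_cancel']

theorem continuousAt_outerProfile (hn : (n : ℝ) ≠ 0) (hβ : β ≠ 0) (hε : ε ≠ 0) (t : ℝ) :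
    ContinuousAt (fun q : ℝ × ℝ => outerProfile n β ε q.1 q.2) (0, t) := by
  have hεα : ContinuousAt (fun q : ℝ × ℝ => ε ^ (n * q.1)) (0, t) :=
    continuousAt_const.rpow (by fun_prop) (.inl hε)
  have hnα : ContinuousAt (fun q : ℝ × ℝ => (n : ℝ) ^ q.1) (0, t) :=
    continuousAt_const.rpow continuousAt_fst (.inl hn)
  have hβα : ContinuousAt (fun q : ℝ × ℝ => β ^ (1 + q.1)) (0, t) :=
    continuousAt_const.rpow (by fun_prop) (.inl hβ)
  have htα : ContinuousAt (fun q : ℝ × ℝ => q.2 ^ (1 - (n - 1) * q.1)) (0, t) :=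
    continuousAt_snd.rpow (by fun_prop) (.inr (by simp))
  unfold outerProfile
  fun_prop (disch := simp [*])

theorem continuousAt_innerProfile (hn : (n : ℝ) ≠ 0) (hβ : β ≠ 0) (hε : ε ≠ 0) (t : ℝ) :
    ContinuousAt (fun q : ℝ × ℝ => innerProfile n β ε q.1 q.2) (0, t) := by
  have hεα : ContinuousAt (fun q : ℝ × ℝ => ε ^ (1 + q.1)) (0, t) :=
    continuousAt_const.rpow (by fun_prop) (.inl hε)
  have htα : ContinuousAt (fun q : ℝ × ℝ => q.2 ^ (1 + q.1)) (0, t) :=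
    continuousAt_snd.rpow (by fun_prop) (.inr (by simp))
  have hnα : ContinuousAt (fun q : ℝ × ℝ => (n : ℝ) ^ q.1) (0, t) :=
    continuousAt_const.rpow continuousAt_fst (.inl hn)
  have hout := (continuousAt_outerProfile hn hβ hε ε).comp
    (f := fun q : ℝ × ℝ => (q.1, ε)) (x := (0, t)) (by fun_prop)
  unfold innerProfile
  fun_prop (disch := simp [*])

variable {p : ℝ}

theorem outerProfile_one_div_sub_one (hβ : 0 < β) (hp : 1 < p) (hnp : n < p) (t : ℝ) :
    outerProfile n β ε (1 / (p - 1)) t =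
      (ε ^ ((n : ℝ) * (1 / (p - 1))) * (p - 1) / ((n : ℝ) ^ (1 / (p - 1)) * (p - (n : ℝ)))) *
          (1 - t ^ ((p - (n : ℝ)) / (p - 1))) +
        ε ^ ((n : ℝ) * (1 / (p - 1))) / ((n : ℝ) * β ^ p) ^ (1 / (p - 1)) := by
  have hp₁ : p - 1 ≠ 0 := by linarith
  have hpn : p - n ≠ 0 := by linarith
  have hq : 1 - (n - 1) * (1 / (p - 1)) = (p - n) / (p - 1) := by field_simp; ring
  have hβp : ((n : ℝ) * β ^ p) ^ (1 / (p - 1)) =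
      (n : ℝ) ^ (1 / (p - 1)) * β ^ (1 + 1 / (p - 1)) := by
    rw [Real.mul_rpow n.cast_nonneg (by positivity), ← Real.rpow_mul hβ.le]
    congr 2
    field_simp
    ring
  rw [outerProfile, hq, hβp]
  field_simp

theorem innerProfile_one_div_sub_one (hβ : 0 < β) (hp : 1 < p) (hnp : n < p) (t : ℝ) :
    innerProfile n β ε (1 / (p - 1)) t =
      ((p - 1) / ((n : ℝ) ^ (1 / (p - 1)) * p)) * (ε ^ (p / (p - 1)) - t ^ (p / (p - 1))) +
        (ε ^ ((n : ℝ) * (1 / (p - 1))) * (p - 1) / ((n : ℝ) ^ (1 / (p - 1)) * (p - (n : ℝ)))) *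
          (1 - ε ^ ((p - (n : ℝ)) / (p - 1))) +
        ε ^ ((n : ℝ) * (1 / (p - 1))) / ((n : ℝ) * β ^ p) ^ (1 / (p - 1)) := by
  have hp₀ : p ≠ 0 := by linarith
  have hp₁ : p - 1 ≠ 0 := by linarith
  have hq : 1 + 1 / (p - 1) = p / (p - 1) := by field_simp; ring
  rw [innerProfile, outerProfile_one_div_sub_one hβ hp hnp, hq, ← add_assoc]
  congr 2
  field_simp

end Profiles

theorem stmt_16_general {n : ℕ} (hn : 2 ≤ n) (β : ℝ) (hβ : 0 < β)
    (ε : ℝ) (hε0 : 0 < ε) :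
    TendstoUniformlyOn
      (fun (p : ℝ) (x : EuclideanSpace ℝ (Fin n)) =>
        if ‖x‖ ≤ ε then
          ((p - 1) / ((n : ℝ) ^ (1 / (p - 1)) * p)) *
              (ε ^ (p / (p - 1)) - ‖x‖ ^ (p / (p - 1))) +
            (ε ^ ((n : ℝ) * (1 / (p - 1))) * (p - 1) /
                ((n : ℝ) ^ (1 / (p - 1)) * (p - (n : ℝ)))) *
              (1 - ε ^ ((p - (n : ℝ)) / (p - 1))) +
            ε ^ ((n : ℝ) * (1 / (p - 1))) / ((n : ℝ) * β ^ p) ^ (1 / (p - 1))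
        else
          (ε ^ ((n : ℝ) * (1 / (p - 1))) * (p - 1) /
              ((n : ℝ) ^ (1 / (p - 1)) * (p - (n : ℝ)))) *
            (1 - ‖x‖ ^ ((p - (n : ℝ)) / (p - 1))) +
            ε ^ ((n : ℝ) * (1 / (p - 1))) / ((n : ℝ) * β ^ p) ^ (1 / (p - 1)))
      (fun x => 1 / β + 1 - ‖x‖)
      atTop (closedBall (0 : EuclideanSpace ℝ (Fin n)) 1) := by
  have hn₀ : (n : ℝ) ≠ 0 := Nat.cast_ne_zero.2 (by omega)
  have hα : Tendsto (fun p : ℝ => 1 / (p - 1)) atTop (𝓝 0) :=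
    tendsto_const_nhds.div_atTop (tendsto_atTop_add_const_right _ (-1) tendsto_id)
  set E := EuclideanSpace ℝ (Fin n)
  have hK : IsCompact (closedBall (0 : E) 1) := isCompact_closedBall 0 1
  have hnorm : Continuous fun q : ℝ × E => (q.1, ‖q.2‖) := by fun_prop
  have h_in := hK.tendstoUniformlyOn_of_continuousAt (fun x _ =>
    (continuousAt_innerProfile hn₀ hβ.ne' hε0.ne' ‖x‖).comp (x := (0, x)) hnorm.continuousAt) hα
  have h_out := hK.tendstoUniformlyOn_of_continuousAt (fun x _ =>
    (continuousAt_outerProfile hn₀ hβ.ne' hε0.ne' ‖x‖).comp (x := (0, x)) hnorm.continuousAt) hα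
  simp only [Function.comp_apply, innerProfile_zero, outerProfile_zero] at h_in h_out
  refine (h_in.ite (p := fun x => ‖x‖ ≤ ε) h_out).congr ?_
  filter_upwards [eventually_gt_atTop (n : ℝ), eventually_gt_atTop 1] with p hnp hp x _
  simp only [innerProfile_one_div_sub_one hβ hp hnp, outerProfile_one_div_sub_one hβ hp hnp]

/-- The explicit radial solutions for `f = 1_{B_ε(0)}` on the unit
ball,
`v_p(x) = ((p−1)/(n^α p))(ε^{p/(p−1)} − |x|^{p/(p−1)}) +
          (ε^{nα}(p−1)/(n^α(p−n)))(1 − ε^{(p−n)/(p−1)}) + ε^{nα}/(nβ^p)^α`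
for `|x| ≤ ε` and
`v_p(x) = (ε^{nα}(p−1)/(n^α(p−n)))(1 − |x|^{(p−n)/(p−1)}) + ε^{nα}/(nβ^p)^α`
for `ε ≤ |x| ≤ 1` (with `α = 1/(p−1)`), converge uniformly on the unit ball, as
`p → ∞`, to `v_∞(x) = 1/β + 1 − |x| = 1/β + d(x, ∂B₁(0))`. -/
theorem stmt_16 {n : ℕ} (hn : 2 ≤ n) (β : ℝ) (hβ : 0 < β)
    (ε : ℝ) (hε0 : 0 < ε) (hε1 : ε < 1) :
    TendstoUniformlyOn
      (fun (p : ℝ) (x : EuclideanSpace ℝ (Fin n)) =>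
        if ‖x‖ ≤ ε then
          ((p - 1) / ((n : ℝ) ^ (1 / (p - 1)) * p)) *
              (ε ^ (p / (p - 1)) - ‖x‖ ^ (p / (p - 1))) +
            (ε ^ ((n : ℝ) * (1 / (p - 1))) * (p - 1) /
                ((n : ℝ) ^ (1 / (p - 1)) * (p - (n : ℝ)))) *
              (1 - ε ^ ((p - (n : ℝ)) / (p - 1))) +
            ε ^ ((n : ℝ) * (1 / (p - 1))) / ((n : ℝ) * β ^ p) ^ (1 / (p - 1))
        else
          (ε ^ ((n : ℝ) * (1 / (p - 1))) * (p - 1) /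
              ((n : ℝ) ^ (1 / (p - 1)) * (p - (n : ℝ)))) *
            (1 - ‖x‖ ^ ((p - (n : ℝ)) / (p - 1))) +
            ε ^ ((n : ℝ) * (1 / (p - 1))) / ((n : ℝ) * β ^ p) ^ (1 / (p - 1)))
      (fun x => 1 / β + 1 - ‖x‖)
      atTop (closedBall (0 : EuclideanSpace ℝ (Fin n)) 1) :=
  stmt_16_general hn β hβ ε hε0
end

section
/- Let Ω ⊂ ℝⁿ be a bounded open set with Lipschitz boundary, β > 0, and for p > 1 let Λ_p denote the first Robin p-Laplacian eigenvalue, Λ_p = inf { ∫_Ω |∇w|^p dx + β^p ∫_{∂Ω} |w|^p dH^{n−1} : w ∈ W^{1,p}(Ω), ‖w‖_{L^p(Ω)} = 1 }. Then limsup_{p→∞} Λ_p^{1/p} ≤ Λ∞ := inf { max(‖∇w‖_{L^∞(Ω)}, β‖w‖_{L^∞(∂Ω)}) : w ∈ W^{1,∞}(Ω), ‖w‖_{L^∞(Ω)} = 1 }. -/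
/-!
Given `w`, Lipschitz on `closure Ω` with `sup_Ω |w| = 1`, the infimum defining `lipConst w` is
attained, so `w` extends to `ℝⁿ` with Lipschitz constant `L = lipConst w`; mollifying gives a
smooth `v` that is still `L`-Lipschitz and `ε`-close to `w`. Normalised in `L^p(Ω)`, `v` is
admissible for `Λ_p`. Its energy is at most `K^p C` with `K = max L (β (sup_{∂Ω} |w| + ε))`,
because `∫ f^p ≤ M^p ∫ (f/M)^q` whenever `f ≤ M` and `p ≥ q`; and `∫_Ω |v|^p ≥ (1 - 2ε)^p |U|`
for the nonempty open set `U ⊆ Ω` where `|v| > 1 - 2ε`. Taking `p`-th roots,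
`limsup Λ_p^{1/p} ≤ K / (1 - 2ε)`, and `ε → 0` gives the bound by `max L (β sup_{∂Ω} |w|)`.
-/

open MeasureTheory Metric Filter

/-- The optimal Lipschitz constant of `w` on a set `s`, playing the role of
`‖∇w‖_{L^∞}` for `w ∈ W^{1,∞}`. -/
noncomputable def lipConst {E : Type*} [NormedAddCommGroup E]
    (w : E → ℝ) (s : Set E) : ℝ :=
  sInf {L : ℝ | 0 ≤ L ∧ ∀ x ∈ s, ∀ y ∈ s, |w x - w y| ≤ L * dist x y}

open Set
open scoped Convolution Topology NNReal ContDiff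

theorem lipConst_nonneg {E : Type*} [NormedAddCommGroup E] (w : E → ℝ) (s : Set E) :
    0 ≤ lipConst w s :=
  Real.sInf_nonneg fun _ hL => hL.1

theorem LipschitzOnWith.lipschitzOnWith_lipConst {E : Type*} [NormedAddCommGroup E]
    {w : E → ℝ} {s : Set E} {K : ℝ≥0} (hw : LipschitzOnWith K w s) :
    LipschitzOnWith (lipConst w s).toNNReal w s := by
  set S := {L : ℝ | 0 ≤ L ∧ ∀ x ∈ s, ∀ y ∈ s, |w x - w y| ≤ L * dist x y}
  have hS : IsClosed S := by
    simp only [S, ofPred_and, ofPred_forall]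
    exact isClosed_Ici.inter <| isClosed_biInter fun x _ => isClosed_biInter fun y _ =>
      isClosed_le continuous_const (by fun_prop)
  have hK : (K : ℝ) ∈ S := ⟨K.2, fun x hx y hy => by
    simpa only [Real.dist_eq] using hw.dist_le_mul x hx y hy⟩
  have hmem : lipConst w s ∈ S := hS.csInf_mem ⟨K, hK⟩ ⟨0, fun _ hL => hL.1⟩
  refine LipschitzOnWith.of_dist_le_mul fun x hx y hy => ?_
  rw [Real.coe_toNNReal _ hmem.1, Real.dist_eq]
  exact hmem.2 x hx y hy

section Mollification

variable {G : Type*} [NormedAddCommGroup G] [NormedSpace ℝ G] [FiniteDimensional ℝ G]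
  {K : ℝ≥0} {g : G → ℝ}

theorem ContDiffBump.lipschitzWith_normed_convolution [MeasurableSpace G] [BorelSpace G]
    {μ : Measure G} [μ.IsAddHaarMeasure] (φ : ContDiffBump (0 : G)) (hg : LipschitzWith K g) :
    LipschitzWith K (φ.normed μ ⋆[ContinuousLinearMap.lsmul ℝ ℝ, μ] g) := by
  have hint : ∀ x, Integrable (fun t => φ.normed μ t • g (x - t)) μ := fun x =>
    (φ.continuous_normed.smul (hg.continuous.comp (continuous_const.sub continuous_id)))
      |>.integrable_of_hasCompactSupport φ.hasCompactSupport_normed.smul_right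
  refine LipschitzWith.of_dist_le_mul fun x y => ?_
  simp only [dist_eq_norm, convolution_def, ContinuousLinearMap.lsmul_apply]
  rw [← integral_sub (hint x) (hint y)]
  calc ‖∫ t, (φ.normed μ t • g (x - t) - φ.normed μ t • g (y - t)) ∂μ‖
      ≤ ∫ t, φ.normed μ t * (K * ‖x - y‖) ∂μ := by
        refine norm_integral_le_of_norm_le (φ.integrable_normed.mul_const _)
          (Eventually.of_forall fun t => ?_)
        rw [← smul_sub, norm_smul, Real.norm_of_nonneg (φ.nonneg_normed t)]
        exact mul_le_mul_of_nonneg_left (by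
          simpa only [dist_eq_norm, sub_sub_sub_cancel_right] using hg.dist_le_mul (x - t) (y - t))
          (φ.nonneg_normed t)
    _ = K * ‖x - y‖ := by rw [integral_mul_const, φ.integral_normed, one_mul]

theorem LipschitzWith.exists_contDiff_lipschitzWith_dist_le (hg : LipschitzWith K g)
    {ε : ℝ} (hε : 0 < ε) :
    ∃ v : G → ℝ, ContDiff ℝ ∞ v ∧ LipschitzWith K v ∧ ∀ x, dist (v x) (g x) ≤ ε := by
  borelize G
  set δ := ε / (K + 1)
  have hδ : 0 < δ := by positivity
  have hKδ : K * δ ≤ ε := by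
    rw [mul_div_assoc', div_le_iff₀ (by positivity)]
    nlinarith
  let φ : ContDiffBump (0 : G) := ⟨δ / 2, δ, half_pos hδ, half_lt_self hδ⟩
  refine ⟨φ.normed Measure.addHaar ⋆[ContinuousLinearMap.lsmul ℝ ℝ, Measure.addHaar] g,
    φ.hasCompactSupport_normed.contDiff_convolution_left _ φ.contDiff_normed
      hg.continuous.locallyIntegrable,
    φ.lipschitzWith_normed_convolution hg,
    fun x => φ.dist_normed_convolution_le hg.continuous.aestronglyMeasurable fun y hy => ?_⟩
  exact (hg.dist_le_mul y x).trans <| (mul_le_mul_of_nonneg_left (mem_ball.1 hy).le K.2).trans hKδ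

end Mollification

section Integrals

variable {α : Type*} [MeasurableSpace α] {μ : Measure α} {f : α → ℝ}

theorem exists_integral_rpow_le_rpow_mul (hf0 : ∀ x, 0 ≤ f x) {M : ℝ} (hM : 0 < M)
    (hfM : ∀ᵐ x ∂μ, f x ≤ M) :
    ∃ C, 0 ≤ C ∧ ∀ᶠ p : ℝ in atTop, ∫ x, f x ^ p ∂μ ≤ M ^ p * C := by
  -- if no power `f ^ q` is integrable, every integral below is the junk value `0`
  by_cases hint : ∃ q : ℝ, 0 < q ∧ Integrable (fun x => f x ^ q) μ
  · obtain ⟨q, hq, hfq⟩ := hint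
    refine ⟨M ^ (-q) * ∫ x, f x ^ q ∂μ,
      mul_nonneg (by positivity) (integral_nonneg fun x => by have := hf0 x; positivity), ?_⟩
    filter_upwards [eventually_ge_atTop q] with p hqp
    have hpt : ∀ᵐ x ∂μ, f x ^ p ≤ M ^ p * (M ^ (-q) * f x ^ q) := by
      filter_upwards [hfM] with x hx
      have hx0 := hf0 x
      calc f x ^ p = M ^ p * (f x / M) ^ p := by
            rw [Real.div_rpow hx0 hM.le]; field_simp
        _ ≤ M ^ p * (f x / M) ^ q := by
            refine mul_le_mul_of_nonneg_left ?_ (by positivity)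
            exact Real.rpow_le_rpow_of_exponent_ge' (by positivity) ((div_le_one hM).2 hx)
              hq.le hqp
        _ = M ^ p * (M ^ (-q) * f x ^ q) := by
            rw [Real.div_rpow hx0 hM.le, Real.rpow_neg hM.le]; ring
    calc ∫ x, f x ^ p ∂μ ≤ ∫ x, M ^ p * (M ^ (-q) * f x ^ q) ∂μ :=
          integral_mono_of_nonneg (Eventually.of_forall fun x => by have := hf0 x; positivity)
            ((hfq.const_mul _).const_mul _) hpt
      _ = M ^ p * (M ^ (-q) * ∫ x, f x ^ q ∂μ) := by rw [integral_const_mul, integral_const_mul]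
  · push Not at hint
    refine ⟨0, le_rfl, ?_⟩
    filter_upwards [eventually_gt_atTop 0] with p hp
    rw [integral_undef (hint p hp), mul_zero]

theorem rpow_mul_measureReal_le_setIntegral_rpow (hf0 : ∀ x, 0 ≤ f x) {s t : Set α} {a p : ℝ}
    (hf : IntegrableOn (fun x => f x ^ p) s μ) (ht : MeasurableSet t) (hts : t ⊆ s)
    (hμt : μ t ≠ ⊤) (ha : 0 ≤ a) (hp : 0 ≤ p) (hfa : ∀ x ∈ t, a ≤ f x) :
    a ^ p * μ.real t ≤ ∫ x in s, f x ^ p ∂μ :=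
  calc a ^ p * μ.real t = ∫ _ in t, a ^ p ∂μ := by rw [setIntegral_const, smul_eq_mul, mul_comm]
    _ ≤ ∫ x in t, f x ^ p ∂μ :=
        setIntegral_mono_on (integrableOn_const hμt) (hf.mono_set hts) ht fun x hx =>
          Real.rpow_le_rpow ha (hfa x hx) hp
    _ ≤ ∫ x in s, f x ^ p ∂μ :=
        setIntegral_mono_set hf (Eventually.of_forall fun x => by have := hf0 x; positivity)
          hts.eventuallyLE

end Integrals

theorem limsup_rpow_one_div_le {f : ℝ → ℝ} (hf : ∀ p, 0 ≤ f p) {c D : ℝ} (hc : 0 ≤ c)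
    (hD : 0 ≤ D) (h : ∀ᶠ p in atTop, f p ≤ c ^ p * D) :
    limsup (fun p => f p ^ (1 / p)) atTop ≤ c := by
  have hlim : Tendsto (fun p : ℝ => c * (D + 1) ^ (1 / p)) atTop (𝓝 c) := by
    have h1p : Tendsto (fun p : ℝ => 1 / p) atTop (𝓝 0) := by
      simpa only [one_div] using tendsto_inv_atTop_zero
    simpa only [Real.rpow_zero, mul_one, Function.comp_def] using
      ((Real.continuousAt_const_rpow (by positivity : D + 1 ≠ 0)).tendsto.comp h1p).const_mul c
  have hle : ∀ᶠ p in atTop, f p ^ (1 / p) ≤ c * (D + 1) ^ (1 / p) := by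
    filter_upwards [h, eventually_gt_atTop 0] with p hp hp0
    calc f p ^ (1 / p) ≤ (c ^ p * (D + 1)) ^ (1 / p) :=
          Real.rpow_le_rpow (hf p) (hp.trans (by gcongr; linarith)) (by positivity)
      _ = c * (D + 1) ^ (1 / p) := by
          rw [Real.mul_rpow (by positivity) (by positivity), one_div,
            Real.rpow_rpow_inv hc hp0.ne']
  calc limsup (fun p => f p ^ (1 / p)) atTop ≤ limsup (fun p => c * (D + 1) ^ (1 / p)) atTop :=
        limsup_le_limsup hle
          (isCoboundedUnder_le_of_le atTop fun p => Real.rpow_nonneg (hf p) _)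
          hlim.isBoundedUnder_le
    _ = c := hlim.limsup_eq

section Robin

variable {n : ℕ} {Ω : Set (EuclideanSpace ℝ (Fin n))} {β p : ℝ}

noncomputable def robinEnergy (Ω : Set (EuclideanSpace ℝ (Fin n))) (β p : ℝ)
    (w : EuclideanSpace ℝ (Fin n) → ℝ) : ℝ :=
  (∫ x in Ω, ‖fderiv ℝ w x‖ ^ p) + β ^ p * ∫ x in frontier Ω, |w x| ^ p ∂(μH[(n : ℝ) - 1])

/-- The admissible values of the Rayleigh quotient; `Λ_p` is its infimum. -/
def robinEnergySet (Ω : Set (EuclideanSpace ℝ (Fin n))) (β p : ℝ) : Set ℝ :=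
  {r : ℝ | ∃ w : EuclideanSpace ℝ (Fin n) → ℝ,
    ContDiff ℝ 1 w ∧ (∫ x in Ω, |w x| ^ p) = 1 ∧ r = robinEnergy Ω β p w}

theorem robinEnergy_nonneg (hβ : 0 ≤ β) (w : EuclideanSpace ℝ (Fin n) → ℝ) :
    0 ≤ robinEnergy Ω β p w :=
  add_nonneg (integral_nonneg fun _ => by positivity)
    (mul_nonneg (by positivity) (integral_nonneg fun _ => by positivity))

theorem robinEnergy_const_smul {c : ℝ} (hc : 0 ≤ c) (w : EuclideanSpace ℝ (Fin n) → ℝ) :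
    robinEnergy Ω β p (c • w) = c ^ p * robinEnergy Ω β p w := by
  simp only [robinEnergy, fderiv_const_smul_field, Pi.smul_apply, smul_eq_mul, norm_smul,
    abs_mul, Real.norm_of_nonneg hc, abs_of_nonneg hc,
    Real.mul_rpow hc (norm_nonneg _), Real.mul_rpow hc (abs_nonneg _), integral_const_mul]
  ring

theorem robinEnergy_div_mem_robinEnergySet {w : EuclideanSpace ℝ (Fin n) → ℝ}
    (hw : ContDiff ℝ 1 w) (hp : p ≠ 0) (hI : 0 < ∫ x in Ω, |w x| ^ p) :
    robinEnergy Ω β p w / (∫ x in Ω, |w x| ^ p) ∈ robinEnergySet Ω β p := by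
  set I := ∫ x in Ω, |w x| ^ p
  set c := (I ^ p⁻¹)⁻¹
  have hc : 0 ≤ c := by positivity
  have hcp : c ^ p = I⁻¹ := by rw [Real.inv_rpow (by positivity), Real.rpow_inv_rpow hI.le hp]
  refine ⟨c • w, contDiff_const.smul hw, ?_, ?_⟩
  · simp only [Pi.smul_apply, smul_eq_mul, abs_mul, abs_of_nonneg hc,
      Real.mul_rpow hc (abs_nonneg _), integral_const_mul, hcp]
    exact inv_mul_cancel₀ hI.ne'
  · rw [robinEnergy_const_smul hc, hcp, div_eq_inv_mul]

theorem sInf_robinEnergySet_nonneg (hβ : 0 ≤ β) : 0 ≤ sInf (robinEnergySet Ω β p) :=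
  Real.sInf_nonneg fun _ ⟨w, _, _, hr⟩ => hr ▸ robinEnergy_nonneg hβ w

theorem exists_robinEnergy_le_rpow_mul (hβ : 0 < β) {v : EuclideanSpace ℝ (Fin n) → ℝ}
    {L : ℝ≥0} (hvL : LipschitzWith L v) {M : ℝ} (hM : 0 < M)
    (hvM : ∀ x ∈ frontier Ω, |v x| ≤ M) :
    ∃ C, 0 ≤ C ∧ ∀ᶠ p : ℝ in atTop, robinEnergy Ω β p v ≤ max (L : ℝ) (β * M) ^ p * C := by
  set K := max (L : ℝ) (β * M)
  have hK : 0 < K := (mul_pos hβ hM).trans_le (le_max_right _ _)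
  obtain ⟨C₁, hC₁, hgrad⟩ := exists_integral_rpow_le_rpow_mul (μ := volume.restrict Ω)
    (fun x => norm_nonneg (fderiv ℝ v x)) hK
    (Eventually.of_forall fun x => (norm_fderiv_le_of_lipschitz ℝ hvL).trans (le_max_left _ _))
  obtain ⟨C₂, hC₂, hbdry⟩ := exists_integral_rpow_le_rpow_mul
    (μ := (μH[(n : ℝ) - 1]).restrict (frontier Ω)) (fun x => abs_nonneg (v x)) hM
    ((ae_restrict_iff' isClosed_frontier.measurableSet).2 (Eventually.of_forall hvM))
  refine ⟨C₁ + C₂, add_nonneg hC₁ hC₂, ?_⟩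
  filter_upwards [hgrad, hbdry, eventually_gt_atTop 0] with p hp₁ hp₂ hp
  have hβM : β ^ p * M ^ p ≤ K ^ p := by
    rw [← Real.mul_rpow hβ.le hM.le]
    exact Real.rpow_le_rpow (by positivity) (le_max_right _ _) hp.le
  calc robinEnergy Ω β p v ≤ K ^ p * C₁ + β ^ p * (M ^ p * C₂) :=
        add_le_add hp₁ (mul_le_mul_of_nonneg_left hp₂ (by positivity))
    _ ≤ K ^ p * C₁ + K ^ p * C₂ := by
        rw [← mul_assoc]; gcongr
    _ = K ^ p * (C₁ + C₂) := by ring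

theorem limsup_sInf_robinEnergySet_rpow_le (hΩo : IsOpen Ω) (hΩb : Bornology.IsBounded Ω)
    (hβ : 0 < β) {v : EuclideanSpace ℝ (Fin n) → ℝ} (hv : ContDiff ℝ 1 v) {L : ℝ≥0}
    (hvL : LipschitzWith L v) {M : ℝ} (hM : 0 < M) (hvM : ∀ x ∈ frontier Ω, |v x| ≤ M)
    {a : ℝ} (ha : 0 < a) {x₀ : EuclideanSpace ℝ (Fin n)} (hx₀ : x₀ ∈ Ω) (hax₀ : a < |v x₀|) :
    limsup (fun p => sInf (robinEnergySet Ω β p) ^ (1 / p)) atTop ≤ max (L : ℝ) (β * M) / a := by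
  set K := max (L : ℝ) (β * M)
  have hK : 0 < K := (mul_pos hβ hM).trans_le (le_max_right _ _)
  obtain ⟨C, hC, hE⟩ := exists_robinEnergy_le_rpow_mul (Ω := Ω) hβ hvL hM hvM
  set U := Ω ∩ {x | a < |v x|}
  have hUo : IsOpen U := hΩo.inter (isOpen_lt continuous_const hv.continuous.abs)
  have hUfin : volume U ≠ ⊤ :=
    ((measure_mono inter_subset_left).trans_lt hΩb.measure_lt_top).ne
  have hU : 0 < volume.real U :=
    ENNReal.toReal_pos (hUo.measure_ne_zero volume ⟨x₀, hx₀, hax₀⟩) hUfin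
  refine limsup_rpow_one_div_le (f := fun p => sInf (robinEnergySet Ω β p)) (c := K / a)
    (D := C / volume.real U) (fun p => sInf_robinEnergySet_nonneg hβ.le)
    (by positivity) (by positivity) ?_
  filter_upwards [hE, eventually_gt_atTop 0] with p hEp hp
  set I := ∫ x in Ω, |v x| ^ p
  have hI : a ^ p * volume.real U ≤ I :=
    rpow_mul_measureReal_le_setIntegral_rpow (fun x => abs_nonneg (v x))
      (((hv.continuous.abs.rpow_const fun _ => Or.inr hp.le).continuousOn.integrableOn_compact
        hΩb.isCompact_closure).mono_set subset_closure)
      hUo.measurableSet inter_subset_left hUfin ha.le hp.le fun x hx => hx.2.le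
  have hIpos : 0 < I := (by positivity : 0 < a ^ p * volume.real U).trans_le hI
  calc sInf (robinEnergySet Ω β p) ≤ robinEnergy Ω β p v / I :=
        csInf_le ⟨0, fun _ ⟨w, _, _, hr⟩ => hr ▸ robinEnergy_nonneg hβ.le w⟩
          (robinEnergy_div_mem_robinEnergySet hv hp.ne' hIpos)
    _ ≤ K ^ p * C / (a ^ p * volume.real U) :=
        div_le_div₀ (by positivity) hEp (by positivity) hI
    _ = (K / a) ^ p * (C / volume.real U) := by
        rw [Real.div_rpow hK.le ha.le]; field_simp

theorem limsup_sInf_robinEnergySet_rpow_le_of_lipschitzOnWith (hΩo : IsOpen Ω)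
    (hΩb : Bornology.IsBounded Ω) (hβ : 0 < β) {w : EuclideanSpace ℝ (Fin n) → ℝ} {K : ℝ≥0}
    (hw : LipschitzOnWith K w (closure Ω)) (hw1 : sSup ((fun x => |w x|) '' Ω) = 1) :
    limsup (fun p => sInf (robinEnergySet Ω β p) ^ (1 / p)) atTop ≤
      max (lipConst w (closure Ω)) (β * sSup ((fun x => |w x|) '' frontier Ω)) := by
  set L := lipConst w (closure Ω)
  set S := sSup ((fun x => |w x|) '' frontier Ω)
  have hbdd : BddAbove ((fun x => |w x|) '' closure Ω) :=
    (hΩb.isCompact_closure.image_of_continuousOn hw.continuousOn.abs).bddAbove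
  have hS : 0 ≤ S := Real.sSup_nonneg (by rintro _ ⟨x, -, rfl⟩; exact abs_nonneg _)
  have hne : ((fun x => |w x|) '' Ω).Nonempty := by
    by_contra h
    simp [not_nonempty_iff_eq_empty.1 h] at hw1
  obtain ⟨g, hg, hgw⟩ := hw.lipschitzOnWith_lipConst.extend_real
  have hε : ∀ ε ∈ Ioo (0 : ℝ) (1 / 2),
      limsup (fun p => sInf (robinEnergySet Ω β p) ^ (1 / p)) atTop ≤
        max L (β * (S + ε)) / (1 - 2 * ε) := by
    rintro ε ⟨hε0, hε1⟩
    obtain ⟨v, hv, hvL, hvg⟩ := hg.exists_contDiff_lipschitzWith_dist_le hε0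
    have hvw : ∀ x ∈ closure Ω, |v x - w x| ≤ ε := fun x hx => by
      simpa only [hgw hx, Real.dist_eq] using hvg x
    obtain ⟨_, ⟨x₀, hx₀, rfl⟩, hx₀1⟩ : ∃ r ∈ (fun x => |w x|) '' Ω, 1 - ε < r :=
      exists_lt_of_lt_csSup hne (by linarith)
    rw [← Real.coe_toNNReal L (lipConst_nonneg _ _)]
    refine limsup_sInf_robinEnergySet_rpow_le hΩo hΩb hβ (hv.of_le (by simp)) hvL
      (by linarith) (fun x hx => ?_) (by linarith) hx₀ ?_
    · have hwS : |w x| ≤ S :=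
        le_csSup (hbdd.mono (image_mono frontier_subset_closure)) (mem_image_of_mem _ hx)
      linarith [hvw x (frontier_subset_closure hx), abs_sub_abs_le_abs_sub (v x) (w x)]
    · linarith [hvw x₀ (subset_closure hx₀), abs_sub_abs_le_abs_sub (w x₀) (v x₀),
        abs_sub_comm (w x₀) (v x₀)]
  have hlim : Tendsto (fun ε => max L (β * (S + ε)) / (1 - 2 * ε)) (𝓝[>] 0)
      (𝓝 (max L (β * S))) := by
    have hcont : ContinuousAt (fun ε => max L (β * (S + ε)) / (1 - 2 * ε)) 0 :=
      ContinuousAt.div (by fun_prop) (by fun_prop) (by norm_num)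
    simpa using hcont.tendsto.mono_left nhdsWithin_le_nhds
  exact ge_of_tendsto hlim (mem_of_superset (Ioo_mem_nhdsGT (by norm_num)) hε)

end Robin

/-- `limsup_{p→∞} Λ_p^{1/p} ≤ Λ∞`, where `Λ_p` is the first Robin
`p`-Laplacian eigenvalue (Rayleigh quotient over `w` with `‖w‖_{L^p(Ω)} = 1`) and
`Λ∞` is the infimum of `max(‖∇w‖_{L^∞(Ω)}, β‖w‖_{L^∞(∂Ω)})` over `w ∈ W^{1,∞}(Ω)`
with `‖w‖_{L^∞(Ω)} = 1`. -/
theorem stmt_18 {n : ℕ} (Ω : Set (EuclideanSpace ℝ (Fin n)))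
    (hΩo : IsOpen Ω) (hΩb : Bornology.IsBounded Ω) (hΩne : Ω.Nonempty)
    (β : ℝ) (hβ : 0 < β) :
    limsup (fun p : ℝ =>
        (sInf {r : ℝ | ∃ w : EuclideanSpace ℝ (Fin n) → ℝ,
          ContDiff ℝ 1 w ∧ (∫ x in Ω, |w x| ^ p) = 1 ∧
          r = (∫ x in Ω, ‖fderiv ℝ w x‖ ^ p) +
            β ^ p * ∫ x in frontier Ω, |w x| ^ p ∂(μH[(n : ℝ) - 1])}) ^ (1 / p))
      atTop ≤
      sInf {m : ℝ | ∃ w : EuclideanSpace ℝ (Fin n) → ℝ,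
        (∃ L : NNReal, LipschitzOnWith L w (closure Ω)) ∧
        sSup ((fun x => |w x|) '' Ω) = 1 ∧
        m = max (lipConst w (closure Ω))
                (β * sSup ((fun x => |w x|) '' frontier Ω))} := by
  refine le_csInf ⟨_, fun _ => 1, ⟨0, (LipschitzWith.const 1).lipschitzOnWith⟩, ?_, rfl⟩ ?_
  · simp [hΩne.image_const]
  · rintro _ ⟨w, ⟨K, hw⟩, hw1, rfl⟩
    exact limsup_sInf_robinEnergySet_rpow_le_of_lipschitzOnWith hΩo hΩb hβ hw hw1
end
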